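/- Let F be a finite field and let the affine group A_F act by measure preserving transformations on a probability space (Ω,B,μ). If B ∈ B satisfies μ(B) > √(6/|F|), then there exists u ∈ F* with μ(B ∩ M_u A_{-u} B) > 0. -/

import Mathlib

/-!
Pass to the Koopman representation on `L²(μ)`, where `A_v` and `M_u` act by linear isometries,
and write `1_B = P 1_B + g` with `P` the average over the translations. The correlations
`μ(B ∩ M_u A_{-u} B) = ⟪1_B, M_u⁻¹ A_u 1_B⟫` summed over `u ∈ F*` split into two parts.
With `q = |F|`, the `P 1_B` part is `(q - 1) ‖R 1_B‖² ≥ (q - 1) μ(B)²`, where `R` averages over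
the whole affine group. The `g` part is `⟪1_B, Σ_u M_u⁻¹ A_u g⟫`; in the expansion of
`‖Σ_u M_u⁻¹ A_u g‖²` the pair `(u, ut)` contributes `⟪g, M_t⁻¹ A_{u(t - t⁻¹)} g⟫`, and for
`t ≠ ±1` the sum over `u` runs over all nonzero translations, so it equals `-⟪g, M_t⁻¹ g⟫`
because `g` has translation average zero. Hence `‖Σ_u M_u⁻¹ A_u g‖² ≤ 3 (q - 1) ‖g‖²`, and the
sum of correlations is at least `(q - 1) μ(B)² - √(3 (q - 1)) μ(B)`, which is positive as soon
as `μ(B)² > 6 / q`.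
-/

open MeasureTheory
open scoped InnerProductSpace

/-- A measure preserving action of the affine group `A_F` of a field `F` on `(Ω, μ)`. -/
structure AffineAction (F : Type*) [Field F] {Ω : Type*} [MeasurableSpace Ω]
    (μ : Measure Ω) where
  TA : F → Ω → Ω
  TM : F → Ω → Ω
  TA_zero : TA 0 = id
  TA_add : ∀ u v : F, TA (u + v) = TA u ∘ TA v
  TM_one : TM 1 = id
  TM_mul : ∀ u v : F, u ≠ 0 → v ≠ 0 → TM (u * v) = TM u ∘ TM v
  comm : ∀ u v : F, u ≠ 0 → TM u ∘ TA v = TA (u * v) ∘ TM u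
  TA_mp : ∀ u : F, MeasurePreserving (TA u) μ μ
  TM_mp : ∀ u : F, u ≠ 0 → MeasurePreserving (TM u) μ μ

theorem Fintype.sum_units_eq_sum_sub_zero {G₀ M : Type*} [GroupWithZero G₀] [Fintype G₀]
    [DecidableEq G₀] [AddCommGroup M] (f : G₀ → M) : ∑ u : G₀ˣ, f u = ∑ a, f a - f 0 := by
  rw [Fintype.sum_eq_add_sum_subtype_ne f 0, add_sub_cancel_left]
  exact Fintype.sum_equiv unitsEquivNeZero _ _ fun _ => rfl

theorem Units.card_filter_inv_eq_self_le_two {R : Type*} [Ring R] [NoZeroDivisors R]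
    [Fintype Rˣ] [DecidableEq Rˣ] : (Finset.univ.filter fun u : Rˣ => u⁻¹ = u).card ≤ 2 := by
  refine (Finset.card_le_card (t := {1, -1}) fun u hu => ?_).trans Finset.card_le_two
  simpa [Units.inv_eq_self_iff] using hu

section OrbitAverage

variable {ι E : Type*} [Fintype ι] [NormedAddCommGroup E] [InnerProductSpace ℝ E]

theorem LinearIsometry.inner_map_left_eq_of_rightInverse {S S' : E →ₗᵢ[ℝ] E}
    (h : Function.RightInverse S' S) (x y : E) : ⟪S x, y⟫_ℝ = ⟪x, S' y⟫_ℝ := by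
  rw [← S.inner_map_map x (S' y), h]

noncomputable def orbitAverage (T : ι → E →ₗᵢ[ℝ] E) (x : E) : E :=
  (Fintype.card ι : ℝ)⁻¹ • ∑ i, T i x

variable {T : ι → E →ₗᵢ[ℝ] E}

theorem map_orbitAverage_of_perm (S : E →ₗᵢ[ℝ] E) (σ : ι ≃ ι) {x : E}
    (h : ∀ i, S (T i x) = T (σ i) x) : S (orbitAverage T x) = orbitAverage T x := by
  simp only [orbitAverage, map_smul, map_sum, h, Equiv.sum_comp σ (fun i => T i x)]

theorem card_smul_orbitAverage [Nonempty ι] (x : E) :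
    (Fintype.card ι : ℝ) • orbitAverage T x = ∑ i, T i x := by
  rw [orbitAverage, smul_smul, mul_inv_cancel₀ (Nat.cast_ne_zero.mpr Fintype.card_ne_zero),
    one_smul]

theorem inner_orbitAverage_left_of_fixed [Nonempty ι] {y : E} (hy : ∀ i, T i y = y) (x : E) :
    ⟪orbitAverage T x, y⟫_ℝ = ⟪x, y⟫_ℝ := by
  have hT : ∀ i, ⟪T i x, y⟫_ℝ = ⟪x, y⟫_ℝ := fun i => by
    rw [← (T i).inner_map_map x y, hy]
  simp only [orbitAverage, inner_smul_left, sum_inner, hT, Finset.sum_const, Finset.card_univ,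
    nsmul_eq_mul, RCLike.conj_to_real]
  field_simp

theorem inner_orbitAverage_eq_norm_sq [Nonempty ι] {x : E}
    (h : ∀ i, T i (orbitAverage T x) = orbitAverage T x) :
    ⟪x, orbitAverage T x⟫_ℝ = ‖orbitAverage T x‖ ^ 2 := by
  rw [← inner_orbitAverage_left_of_fixed h, real_inner_self_eq_norm_sq]

end OrbitAverage

/-- The relations satisfied by the Koopman operators `A v = (· ∘ A_v)` and `M u = (· ∘ M_u)` of
an action of the affine group; precomposition reverses the order of products. -/
structure AffineIsometryRep (F E : Type*) [Field F] [NormedAddCommGroup E]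
    [InnerProductSpace ℝ E] where
  A : F → E →ₗᵢ[ℝ] E
  M : Fˣ → E →ₗᵢ[ℝ] E
  A_zero : ∀ x, A 0 x = x
  A_add : ∀ a b x, A a (A b x) = A (a + b) x
  M_one : ∀ x, M 1 x = x
  M_mul : ∀ a b x, M a (M b x) = M (a * b) x
  A_M : ∀ a b x, A b (M a x) = M a (A (a * b) x)

namespace AffineIsometryRep

variable {F E : Type*} [Field F] [NormedAddCommGroup E] [InnerProductSpace ℝ E]
  (ρ : AffineIsometryRep F E)

theorem inner_A_left (a : F) (x y : E) : ⟪ρ.A a x, y⟫_ℝ = ⟪x, ρ.A (-a) y⟫_ℝ :=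
  LinearIsometry.inner_map_left_eq_of_rightInverse
    (fun y => by rw [ρ.A_add, add_neg_cancel, ρ.A_zero]) x y

theorem inner_M_A_M_A (a s : Fˣ) (b b' : F) (x y : E) :
    ⟪ρ.M a (ρ.A b x), ρ.M (a * s) (ρ.A b' y)⟫_ℝ = ⟪x, ρ.M s (ρ.A (b' - s * b) y)⟫_ℝ := by
  rw [← ρ.M_mul, LinearIsometry.inner_map_map, inner_A_left, A_M, A_add, mul_neg,
    neg_add_eq_sub]

theorem abs_inner_M_self_le (s : Fˣ) (x : E) : |⟪x, ρ.M s x⟫_ℝ| ≤ ‖x‖ ^ 2 := by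
  simpa [sq] using abs_real_inner_le_norm x (ρ.M s x)

variable [Fintype F]

noncomputable def translationAverage (x : E) : E := orbitAverage ρ.A x

theorem A_translationAverage (b : F) (x : E) :
    ρ.A b (ρ.translationAverage x) = ρ.translationAverage x :=
  map_orbitAverage_of_perm _ (Equiv.addLeft b) fun a => ρ.A_add b a x

theorem sum_A_sub_translationAverage (x : E) :
    ∑ a, ρ.A a (x - ρ.translationAverage x) = 0 := by
  simp only [map_sub, A_translationAverage, Finset.sum_sub_distrib, Finset.sum_const,
    Finset.card_univ, ← Nat.cast_smul_eq_nsmul ℝ]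
  rw [translationAverage, card_smul_orbitAverage, sub_self]

theorem norm_sub_translationAverage_le (x : E) : ‖x - ρ.translationAverage x‖ ≤ ‖x‖ := by
  have h := inner_orbitAverage_eq_norm_sq (ρ.A_translationAverage · x)
  have hsq : ‖x - ρ.translationAverage x‖ ^ 2 = ‖x‖ ^ 2 - ‖ρ.translationAverage x‖ ^ 2 := by
    rw [norm_sub_sq_real, translationAverage, h]; ring
  exact (sq_le_sq₀ (norm_nonneg _) (norm_nonneg _)).mp
    (by rw [hsq]; linarith [sq_nonneg ‖ρ.translationAverage x‖])

variable [DecidableEq F]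

noncomputable def affineAverage (x : E) : E := orbitAverage ρ.M (ρ.translationAverage x)

theorem M_affineAverage (b : Fˣ) (x : E) : ρ.M b (ρ.affineAverage x) = ρ.affineAverage x :=
  map_orbitAverage_of_perm _ (Equiv.mulLeft b) fun a => ρ.M_mul b a _

theorem A_affineAverage (b : F) (x : E) : ρ.A b (ρ.affineAverage x) = ρ.affineAverage x :=
  map_orbitAverage_of_perm _ (Equiv.refl _) fun a => by
    rw [ρ.A_M, A_translationAverage, Equiv.refl_apply]

theorem inner_affineAverage_left_of_fixed {e : E} (hA : ∀ a, ρ.A a e = e)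
    (hM : ∀ a, ρ.M a e = e) (x : E) : ⟪ρ.affineAverage x, e⟫_ℝ = ⟪x, e⟫_ℝ := by
  rw [affineAverage, inner_orbitAverage_left_of_fixed hM, translationAverage,
    inner_orbitAverage_left_of_fixed hA]

theorem inner_affineAverage_eq_norm_sq (x : E) :
    ⟪x, ρ.affineAverage x⟫_ℝ = ‖ρ.affineAverage x‖ ^ 2 := by
  rw [← inner_orbitAverage_left_of_fixed (ρ.A_affineAverage · x) x, ← translationAverage,
    affineAverage, inner_orbitAverage_eq_norm_sq (ρ.M_affineAverage · x)]

theorem sq_inner_le_inner_affineAverage {e : E} (hA : ∀ a, ρ.A a e = e)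
    (hM : ∀ a, ρ.M a e = e) (he : ‖e‖ = 1) (x : E) :
    ⟪x, e⟫_ℝ ^ 2 ≤ ⟪x, ρ.affineAverage x⟫_ℝ := by
  rw [← ρ.inner_affineAverage_left_of_fixed hA hM, ρ.inner_affineAverage_eq_norm_sq, sq_le_sq,
    abs_norm]
  simpa [he] using abs_real_inner_le_norm (ρ.affineAverage x) e

noncomputable def twistedSum (x : E) : E := ∑ u : Fˣ, ρ.M u⁻¹ (ρ.A u x)

theorem twistedSum_eq_smul_affineAverage_add (x : E) :
    ρ.twistedSum x = (Fintype.card Fˣ : ℝ) • ρ.affineAverage x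
      + ρ.twistedSum (x - ρ.translationAverage x) := by
  have hP : ∑ u : Fˣ, ρ.M u⁻¹ (ρ.translationAverage x)
      = (Fintype.card Fˣ : ℝ) • ρ.affineAverage x := by
    rw [affineAverage, card_smul_orbitAverage]
    exact Fintype.sum_equiv (Equiv.inv Fˣ) _ _ fun _ => rfl
  simp only [twistedSum, map_sub, A_translationAverage, Finset.sum_sub_distrib, hP]
  abel

theorem sum_A_units_mul_eq_neg {g : E} (hg : ∑ a, ρ.A a g = 0) {c : F} (hc : c ≠ 0) :
    ∑ u : Fˣ, ρ.A (u * c) g = -g := by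
  calc ∑ u : Fˣ, ρ.A (u * c) g = ∑ u : Fˣ, ρ.A u g :=
        Fintype.sum_equiv (Equiv.mulRight (Units.mk0 c hc)) _ _ fun _ => rfl
    _ = -g := by rw [Fintype.sum_units_eq_sum_sub_zero (ρ.A · g), hg, ρ.A_zero, zero_sub]

theorem inner_M_sum_A_le {g : E} (hg : ∑ a, ρ.A a g = 0) (t : Fˣ) :
    ⟪g, ρ.M t⁻¹ (∑ u : Fˣ, ρ.A (u * ((t : F) - (t⁻¹ : Fˣ))) g)⟫_ℝ
      ≤ ‖g‖ ^ 2 + if t⁻¹ = t then (Fintype.card Fˣ : ℝ) * ‖g‖ ^ 2 else 0 := by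
  have hbound := abs_le.mp (ρ.abs_inner_M_self_le t⁻¹ g)
  split_ifs with ht
  · have hsum : ∑ u : Fˣ, ρ.A (u * ((t : F) - (t⁻¹ : Fˣ))) g = (Fintype.card Fˣ : ℝ) • g := by
      simp [ht, ρ.A_zero, ← Nat.cast_smul_eq_nsmul ℝ]
    rw [hsum, map_smul, inner_smul_right]
    nlinarith [sq_nonneg ‖g‖, (Nat.cast_nonneg (Fintype.card Fˣ) : (0 : ℝ) ≤ _)]
  · have hc : (t : F) - (t⁻¹ : Fˣ) ≠ 0 := sub_ne_zero.mpr fun h => ht (Units.ext h).symm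
    rw [ρ.sum_A_units_mul_eq_neg hg hc, map_neg, inner_neg_right]
    linarith

theorem norm_sq_twistedSum_le {g : E} (hg : ∑ a, ρ.A a g = 0) :
    ‖ρ.twistedSum g‖ ^ 2 ≤ 3 * Fintype.card Fˣ * ‖g‖ ^ 2 := by
  have hpair : ∀ u t : Fˣ, ⟪ρ.M u⁻¹ (ρ.A u g), ρ.M (u * t)⁻¹ (ρ.A ↑(u * t) g)⟫_ℝ
      = ⟪g, ρ.M t⁻¹ (ρ.A (u * ((t : F) - (t⁻¹ : Fˣ))) g)⟫_ℝ := by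
    intro u t
    rw [mul_inv, inner_M_A_M_A]
    congr 4
    push_cast
    field_simp
  calc ‖ρ.twistedSum g‖ ^ 2
      = ∑ u : Fˣ, ∑ t : Fˣ, ⟪ρ.M u⁻¹ (ρ.A u g), ρ.M (u * t)⁻¹ (ρ.A ↑(u * t) g)⟫_ℝ := by
        rw [← real_inner_self_eq_norm_sq, twistedSum, sum_inner]
        refine Finset.sum_congr rfl fun u _ => ?_
        rw [inner_sum]
        exact (Equiv.sum_comp (Equiv.mulLeft u) _).symm
    _ = ∑ t : Fˣ, ⟪g, ρ.M t⁻¹ (∑ u : Fˣ, ρ.A (u * ((t : F) - (t⁻¹ : Fˣ))) g)⟫_ℝ := by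
        simp only [hpair, map_sum, inner_sum]
        exact Finset.sum_comm
    _ ≤ ∑ t : Fˣ, (‖g‖ ^ 2 + if t⁻¹ = t then (Fintype.card Fˣ : ℝ) * ‖g‖ ^ 2 else 0) :=
        Finset.sum_le_sum fun t _ => ρ.inner_M_sum_A_le hg t
    _ ≤ 3 * Fintype.card Fˣ * ‖g‖ ^ 2 := by
        rw [Finset.sum_add_distrib, ← Finset.sum_filter, Finset.sum_const, Finset.sum_const,
          Finset.card_univ, nsmul_eq_mul, nsmul_eq_mul]
        have hcount : ((Finset.univ.filter fun t : Fˣ => t⁻¹ = t).card : ℝ) ≤ 2 := by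
          exact_mod_cast Units.card_filter_inv_eq_self_le_two
        nlinarith [mul_nonneg (Nat.cast_nonneg (Fintype.card Fˣ) : (0 : ℝ) ≤ _) (sq_nonneg ‖g‖)]

theorem le_inner_twistedSum {e : E} (hA : ∀ a, ρ.A a e = e) (hM : ∀ a, ρ.M a e = e)
    (he : ‖e‖ = 1) (x : E) :
    Fintype.card Fˣ * ⟪x, e⟫_ℝ ^ 2 - √(3 * Fintype.card Fˣ) * ‖x‖ ^ 2
      ≤ ⟪x, ρ.twistedSum x⟫_ℝ := by
  set n : ℝ := (Fintype.card Fˣ : ℝ)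
  set g := x - ρ.translationAverage x
  have hD : ‖ρ.twistedSum g‖ ≤ √(3 * n) * ‖x‖ := by
    refine (sq_le_sq₀ (norm_nonneg _) (by positivity)).mp ?_
    rw [mul_pow, Real.sq_sqrt (by positivity)]
    calc ‖ρ.twistedSum g‖ ^ 2 ≤ 3 * n * ‖g‖ ^ 2 :=
          ρ.norm_sq_twistedSum_le (ρ.sum_A_sub_translationAverage x)
      _ ≤ 3 * n * ‖x‖ ^ 2 := by gcongr; exact ρ.norm_sub_translationAverage_le x
  have hR : n * ⟪x, e⟫_ℝ ^ 2 ≤ n * ⟪x, ρ.affineAverage x⟫_ℝ :=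
    mul_le_mul_of_nonneg_left (ρ.sq_inner_le_inner_affineAverage hA hM he x)
      (Nat.cast_nonneg _)
  have hG : -(‖x‖ * ‖ρ.twistedSum g‖) ≤ ⟪x, ρ.twistedSum g⟫_ℝ :=
    neg_le_of_abs_le (abs_real_inner_le_norm _ _)
  have hxD : ‖x‖ * ‖ρ.twistedSum g‖ ≤ √(3 * n) * ‖x‖ ^ 2 := by
    nlinarith [mul_le_mul_of_nonneg_left hD (norm_nonneg x)]
  rw [twistedSum_eq_smul_affineAverage_add, inner_add_right, real_inner_smul_right]
  linarith

end AffineIsometryRep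

theorem MeasureTheory.Lp.compMeasurePreserving_congr {α β E : Type*} [MeasurableSpace α]
    [MeasurableSpace β] [NormedAddCommGroup E] {p : ENNReal} {μ : Measure α} {ν : Measure β}
    {f g : α → β} (h : f = g) (hf : MeasurePreserving f μ ν) (hg : MeasurePreserving g μ ν) :
    Lp.compMeasurePreserving (E := E) (p := p) f hf = Lp.compMeasurePreserving g hg := by
  subst h; rfl

namespace AffineAction

variable {F : Type*} [Field F] {Ω : Type*} [MeasurableSpace Ω] {μ : Measure Ω}
  (act : AffineAction F μ)

theorem TA_TA (a b : F) (x : Ω) : act.TA a (act.TA b x) = act.TA (a + b) x := by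
  rw [act.TA_add]; rfl

theorem TM_TM {a b : F} (ha : a ≠ 0) (hb : b ≠ 0) (x : Ω) :
    act.TM a (act.TM b x) = act.TM (a * b) x := by
  rw [act.TM_mul a b ha hb]; rfl

theorem image_TM_comp_TA_neg {u : F} (hu : u ≠ 0) (B : Set Ω) :
    (act.TM u ∘ act.TA (-u)) '' B = act.TM u⁻¹ ⁻¹' (act.TA u ⁻¹' B) := by
  refine congrFun (Set.image_eq_preimage_of_inverse (f := act.TM u ∘ act.TA (-u))
    (g := act.TA u ∘ act.TM u⁻¹) (fun x => ?_) (fun x => ?_)) B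
  · simp only [Function.comp_apply, act.TM_TM (inv_ne_zero hu) hu, inv_mul_cancel₀ hu,
      act.TM_one, act.TA_TA, add_neg_cancel, act.TA_zero, id]
  · simp only [Function.comp_apply, act.TA_TA, neg_add_cancel, act.TA_zero, id,
      act.TM_TM hu (inv_ne_zero hu), mul_inv_cancel₀ hu, act.TM_one]

noncomputable def koopman : AffineIsometryRep F (Lp ℝ 2 μ) where
  A v := Lp.compMeasurePreservingₗᵢ ℝ (act.TA v) (act.TA_mp v)
  M u := Lp.compMeasurePreservingₗᵢ ℝ (act.TM u) (act.TM_mp u u.ne_zero)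
  A_zero x := by
    change Lp.compMeasurePreserving _ _ x = x
    rw [Lp.compMeasurePreserving_congr act.TA_zero _ (MeasurePreserving.id μ),
      Lp.compMeasurePreserving_id_apply]
  A_add a b x := by
    change Lp.compMeasurePreserving _ _ (Lp.compMeasurePreserving _ _ x)
      = Lp.compMeasurePreserving _ _ x
    rw [← Lp.compMeasurePreserving_comp_apply, Lp.compMeasurePreserving_congr
      (g := act.TA (a + b)) (by rw [add_comm, act.TA_add]) _ (act.TA_mp _)]
  M_one x := by
    change Lp.compMeasurePreserving _ _ x = x
    rw [Lp.compMeasurePreserving_congr (by rw [Units.val_one, act.TM_one]) _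
      (MeasurePreserving.id μ), Lp.compMeasurePreserving_id_apply]
  M_mul a b x := by
    change Lp.compMeasurePreserving _ _ (Lp.compMeasurePreserving _ _ x)
      = Lp.compMeasurePreserving _ _ x
    rw [← Lp.compMeasurePreserving_comp_apply, Lp.compMeasurePreserving_congr
      (g := act.TM ↑(a * b)) (by rw [Units.val_mul, mul_comm, act.TM_mul _ _ b.ne_zero a.ne_zero])
      _ (act.TM_mp _ (a * b).ne_zero)]
  A_M a b x := by
    change Lp.compMeasurePreserving _ _ (Lp.compMeasurePreserving _ _ x)
      = Lp.compMeasurePreserving _ _ (Lp.compMeasurePreserving _ _ x)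
    rw [← Lp.compMeasurePreserving_comp_apply, ← Lp.compMeasurePreserving_comp_apply,
      Lp.compMeasurePreserving_congr (act.comm a b a.ne_zero)]

theorem inner_indicator_koopman_M_A [IsFiniteMeasure μ] {B : Set Ω} (hB : MeasurableSet B)
    (u : Fˣ) :
    ⟪indicatorConstLp 2 hB (measure_ne_top μ B) (1 : ℝ),
      act.koopman.M u⁻¹ (act.koopman.A u (indicatorConstLp 2 hB (measure_ne_top μ B) 1))⟫_ℝ
      = μ.real (B ∩ (act.TM u ∘ act.TA (-u)) '' B) := by
  rw [act.image_TM_comp_TA_neg u.ne_zero, ← Units.val_inv_eq_inv_val]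
  exact L2.real_inner_indicatorConstLp_one_indicatorConstLp_one hB
    ((hB.preimage (act.TA_mp u).measurable).preimage (act.TM_mp _ u⁻¹.ne_zero).measurable)

theorem card_units_mul_sq_sub_le_sum_measureReal [Fintype F] [DecidableEq F]
    [IsProbabilityMeasure μ] {B : Set Ω} (hB : MeasurableSet B) :
    Fintype.card Fˣ * μ.real B ^ 2 - √(3 * Fintype.card Fˣ) * μ.real B
      ≤ ∑ u : Fˣ, μ.real (B ∩ (act.TM u ∘ act.TA (-u)) '' B) := by
  set one := indicatorConstLp 2 .univ (measure_ne_top μ .univ) (1 : ℝ)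
  have hf : ‖indicatorConstLp 2 hB (measure_ne_top μ B) (1 : ℝ)‖ ^ 2 = μ.real B := by
    rw [← real_inner_self_eq_norm_sq, L2.real_inner_indicatorConstLp_one_indicatorConstLp_one,
      Set.inter_self]
  have hfe : ⟪indicatorConstLp 2 hB (measure_ne_top μ B) (1 : ℝ), one⟫_ℝ = μ.real B := by
    rw [L2.real_inner_indicatorConstLp_one_indicatorConstLp_one, Set.inter_univ]
  have hone : ‖one‖ = 1 := by simp [one, Lp.norm_const]
  -- `T ⁻¹' univ` is `univ` by definition, so every Koopman operator fixes `one`.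
  have key := act.koopman.le_inner_twistedSum (e := one) (fun _ => rfl) (fun _ => rfl) hone
    (indicatorConstLp 2 hB (measure_ne_top μ B) 1)
  rwa [hf, hfe, AffineIsometryRep.twistedSum, inner_sum,
    Finset.sum_congr rfl fun u _ => act.inner_indicator_koopman_M_A hB u] at key

end AffineAction

theorem mul_sq_sub_sqrt_mul_pos {n δ : ℝ} (hn : 1 ≤ n) (hδ : √(6 / (n + 1)) < δ) :
    0 < n * δ ^ 2 - √(3 * n) * δ := by
  have hδ0 : 0 < δ := (Real.sqrt_nonneg _).trans_lt hδ
  have hδ2 : 6 / (n + 1) < δ ^ 2 := (Real.sqrt_lt' hδ0).mp hδ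
  have h3 : 3 < n * δ ^ 2 := by
    have : 3 ≤ n * (6 / (n + 1)) := by
      rw [mul_div_assoc', le_div_iff₀ (by linarith)]; linarith
    nlinarith
  have hsqrt : √(3 * n) < n * δ := (Real.sqrt_lt' (by positivity)).mpr (by nlinarith)
  nlinarith

/-- Finite field recurrence: if the affine group of a finite field `F` acts by measure
preserving transformations on a probability space and `μ(B) > √(6/|F|)`, then
`μ(B ∩ M_u A_{-u} B) > 0` for some `u ∈ F*`. -/
theorem finite_field_recurrence {F : Type*} [Field F] [Fintype F]
    {Ω : Type*} [MeasurableSpace Ω] {μ : Measure Ω} [IsProbabilityMeasure μ]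
    (act : AffineAction F μ)
    (B : Set Ω) (hB : MeasurableSet B)
    (hμB : Real.sqrt (6 / Fintype.card F) < (μ B).toReal) :
    ∃ u : F, u ≠ 0 ∧ 0 < μ (B ∩ (act.TM u ∘ act.TA (-u)) '' B) := by
  classical
  have hcard : (Fintype.card F : ℝ) = Fintype.card Fˣ + 1 := by
    have := Fintype.card_pos (α := F)
    rw [Fintype.card_units]; push_cast [Nat.cast_sub this]; ring
  have hpos := (mul_sq_sub_sqrt_mul_pos (Nat.one_le_cast.mpr Fintype.card_pos)
    (hcard ▸ hμB)).trans_le (act.card_units_mul_sq_sub_le_sum_measureReal hB)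
  obtain ⟨u, -, hu⟩ := Finset.exists_lt_of_sum_lt (f := fun _ : Fˣ => (0 : ℝ))
    (g := fun u : Fˣ => μ.real (B ∩ (act.TM u ∘ act.TA (-u)) '' B))
    (by rwa [Finset.sum_const_zero])
  exact ⟨u, u.ne_zero, (ENNReal.toReal_pos_iff.mp hu).1⟩
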